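/- Let H be a d-uniform hypergraph in which some family C' of large cores is given, each core having size at most d-1, such that the cores in C' pairwise do not contain one another's significant subsets; if more than (d-1)!·k^{d-1} such cores exist, then by the sunflower lemma there is a (k+1)-sunflower among the cores themselves, and if its core C* is empty then H has no hitting set of size at most k. -/

import Mathlib

/-- `X` is a hitting set of the hypergraph with hyperedge family `H`. -/
def IsHittingSet {V : Type*} [DecidableEq V] (H : Finset (Finset V)) (X : Finset V) : Prop :=
  ∀ F ∈ H, (F ∩ X).Nonempty

/-- `C` is the core of a sunflower in `H` with at least `t` hyperedges. -/
def HasSunflower {V : Type*} [DecidableEq V] (H : Finset (Finset V)) (C : Finset V)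
    (t : ℕ) : Prop :=
  ∃ S ⊆ H, t ≤ S.card ∧ (∀ F ∈ S, C ⊆ F) ∧
    ∀ F ∈ S, ∀ F' ∈ S, F ≠ F' → F ∩ F' = C

/-!
Sunflower lemma (Erdős–Rado), by induction on the size bound `n`: if some point `x` lies in more
than `(n-1)! k^(n-1)` of the sets, a sunflower among the sets through `x`, with `x` removed, lifts
back by reinserting `x`; otherwise a greedy maximal disjoint subfamily `M` must have more than `k`
members, since every nonempty set meets `⋃ M`, which has at most `n |M|` points (the empty set,
which meets nothing, is disjoint from all sets and is added to `M` separately).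

A hitting set `X` meeting every petal but not the core of a sunflower meets the petals in pairwise
disjoint sets, so it has at least as many points as the sunflower has petals. This applies both to
the large cores in `H` and to the sunflower with empty core among the cores.
-/

section

open Finset
open scoped Nat

variable {α : Type*} [DecidableEq α]

def IsSunflower (S : Finset (Finset α)) (c : Finset α) : Prop :=
  (∀ A ∈ S, c ⊆ A) ∧ ∀ A ∈ S, ∀ B ∈ S, A ≠ B → A ∩ B = c

lemma isSunflower_singleton (A : Finset α) : IsSunflower {A} A := by
  simp [IsSunflower]

lemma Set.PairwiseDisjoint.isSunflower_empty {S : Finset (Finset α)}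
    (hS : (S : Set (Finset α)).PairwiseDisjoint id) : IsSunflower S ∅ :=
  ⟨fun A _ => Finset.empty_subset A,
    fun _ hA _ hB hAB => Finset.disjoint_iff_inter_eq_empty.mp (hS hA hB hAB)⟩

lemma IsSunflower.image_insert {S : Finset (Finset α)} {c : Finset α} {x : α}
    (hS : IsSunflower S c) :
    IsSunflower (S.image (insert x)) (insert x c) := by
  refine ⟨?_, ?_⟩
  · simp only [mem_image, forall_exists_index, and_imp, forall_apply_eq_imp_iff₂]
    exact fun A hA => insert_subset_insert x (hS.1 A hA)
  · simp only [mem_image, forall_exists_index, and_imp, forall_apply_eq_imp_iff₂]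
    intro A hA B hB hAB
    rw [← insert_inter_distrib, hS.2 A hA B hB (by rintro rfl; exact hAB rfl)]

lemma IsSunflower.card_le_of_disjoint {S : Finset (Finset α)} {c X : Finset α}
    (hS : IsSunflower S c) (hcX : Disjoint c X) (hmeet : ∀ A ∈ S, (A ∩ X).Nonempty) : #S ≤ #X := by
  have hdisj : (S : Set (Finset α)).PairwiseDisjoint (· ∩ X) := by
    intro A hA B hB hAB
    rw [Function.onFun, disjoint_iff_inter_eq_empty, ← inter_inter_distrib_right,
      hS.2 A hA B hB hAB, ← disjoint_iff_inter_eq_empty]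
    exact hcX
  calc #S ≤ #(S.biUnion (· ∩ X)) := card_le_card_biUnion hdisj hmeet
    _ ≤ #X := card_le_card (biUnion_subset.mpr fun _ _ => inter_subset_right)

lemma IsSunflower.exists_subset_of_subset_memberSubfamily {𝒞 S : Finset (Finset α)}
    {c : Finset α} {x : α} (hS𝒞 : S ⊆ 𝒞.memberSubfamily x) (hS : IsSunflower S c) :
    ∃ T ⊆ 𝒞, #T = #S ∧ IsSunflower T (insert x c) := by
  have hxS : ∀ A ∈ S, x ∉ A := fun A hA => (mem_memberSubfamily.mp (hS𝒞 hA)).2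
  refine ⟨S.image (insert x), ?_, ?_, hS.image_insert⟩
  · exact image_subset_iff.mpr fun A hA => (mem_memberSubfamily.mp (hS𝒞 hA)).1
  · exact card_image_of_injOn fun A hA B hB h => by
      rw [← erase_insert (hxS A hA), h, erase_insert (hxS B hB)]

lemma HasSunflower.inter_nonempty_of_isHittingSet {H : Finset (Finset α)} {C X : Finset α}
    {t : ℕ} (hC : HasSunflower H C t) (hX : IsHittingSet H X) (hXt : #X < t) :
    (C ∩ X).Nonempty := by
  obtain ⟨S, hSH, htS, hS⟩ := hC
  by_contra hCX
  have := IsSunflower.card_le_of_disjoint hS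
    (disjoint_iff_inter_eq_empty.mpr (not_nonempty_iff_eq_empty.mp hCX)) fun A hA => hX A (hSH hA)
  omega

lemma exists_pairwiseDisjoint_forall_not_disjoint_biUnion (𝒞 : Finset (Finset α)) :
    ∃ M ⊆ 𝒞, (M : Set (Finset α)).PairwiseDisjoint id ∧
      ∀ A ∈ 𝒞, A.Nonempty → ¬Disjoint A (M.biUnion id) := by
  induction 𝒞 using Finset.induction_on with
  | empty => exact ⟨∅, Subset.rfl, by simp, by simp⟩
  | insert A 𝒞 _ ih =>
    obtain ⟨M, hM𝒞, hM, hcover⟩ := ih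
    by_cases hA : Disjoint A (M.biUnion id)
    · refine ⟨insert A M, insert_subset_insert A hM𝒞, ?_, ?_⟩
      · rw [coe_insert]
        exact hM.insert fun B hB _ => hA.mono_right (subset_biUnion_of_mem id hB)
      · rw [biUnion_insert]
        rintro B hB hBne
        rcases mem_insert.mp hB with rfl | hB
        · exact fun h =>
            hBne.ne_empty ((disjoint_self_iff_empty B).mp (h.mono_right subset_union_left))
        · exact fun h => hcover B hB hBne (h.mono_right subset_union_right)
    · refine ⟨M, hM𝒞.trans (subset_insert A 𝒞), hM, ?_⟩
      rintro B hB hBne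
      rcases mem_insert.mp hB with rfl | hB
      · exact hA
      · exact hcover B hB hBne

lemma exists_pairwiseDisjoint_card_le {𝒞 : Finset (Finset α)} {n q : ℕ} (hn : 0 < n)
    (hq : 0 < q) (hsize : ∀ A ∈ 𝒞, #A ≤ n) (hdeg : ∀ x, #{A ∈ 𝒞 | x ∈ A} ≤ q) :
    ∃ D ⊆ 𝒞, (D : Set (Finset α)).PairwiseDisjoint id ∧ #𝒞 ≤ n * #D * q := by
  obtain ⟨M, hM𝒞, hM, hcover⟩ := exists_pairwiseDisjoint_forall_not_disjoint_biUnion (𝒞.erase ∅)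
  have hunion : #(M.biUnion id) ≤ #M * n :=
    card_biUnion_le_card_mul _ _ _ fun A hA => hsize A (mem_of_mem_erase (hM𝒞 hA))
  have hnonempty : #(𝒞.erase ∅) * 1 ≤ #(M.biUnion id) * q := by
    refine card_mul_le_card_mul (fun A x => x ∈ A) (fun A hA => ?_) fun x _ => ?_
    · obtain ⟨x, hx⟩ := not_disjoint_iff_nonempty_inter.mp
        (hcover A hA (nonempty_iff_ne_empty.mpr (ne_of_mem_erase hA)))
      exact card_pos.mpr ⟨x, mem_filter.mpr ⟨(mem_inter.mp hx).2, (mem_inter.mp hx).1⟩⟩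
    · exact (card_le_card (filter_subset_filter _ (erase_subset ∅ 𝒞))).trans (hdeg x)
  by_cases hempty : ∅ ∈ 𝒞
  · refine ⟨insert ∅ M, insert_subset hempty (hM𝒞.trans (erase_subset ∅ 𝒞)), ?_, ?_⟩
    · rw [coe_insert]
      exact hM.insert fun B _ _ => disjoint_empty_left B
    · have hemptyM : ∅ ∉ M := fun h => notMem_erase ∅ 𝒞 (hM𝒞 h)
      rw [card_insert_of_notMem hemptyM, ← card_erase_add_one hempty]
      nlinarith
  · refine ⟨M, hM𝒞.trans (erase_subset ∅ 𝒞), hM, ?_⟩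
    rw [erase_eq_of_notMem hempty] at hnonempty
    nlinarith

lemma exists_isSunflower_of_lt_card {𝒞 : Finset (Finset α)} {n k : ℕ}
    (hsize : ∀ A ∈ 𝒞, #A ≤ n) (hcard : n ! * k ^ n < #𝒞) :
    ∃ S ⊆ 𝒞, ∃ c, #S = k + 1 ∧ IsSunflower S c := by
  obtain rfl | hk := k.eq_zero_or_pos
  · obtain ⟨A, hA⟩ := card_pos.mp ((Nat.zero_le _).trans_lt hcard)
    exact ⟨{A}, singleton_subset_iff.mpr hA, A, card_singleton A, isSunflower_singleton A⟩
  induction n generalizing 𝒞 with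
  | zero =>
    have h𝒞 : 𝒞 ⊆ {∅} := fun A hA =>
      mem_singleton.mpr (card_eq_zero.mp (Nat.le_zero.mp (hsize A hA)))
    have := card_le_card h𝒞
    rw [card_singleton] at this
    rw [Nat.factorial_zero, pow_zero, one_mul] at hcard
    omega
  | succ n ih =>
    by_cases hdeg : ∃ x, n ! * k ^ n < #{A ∈ 𝒞 | x ∈ A}
    · obtain ⟨x, hx⟩ := hdeg
      have hlink : n ! * k ^ n < #(𝒞.memberSubfamily x) :=
        hx.trans_le (image_insert_memberSubfamily 𝒞 x ▸ card_image_le)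
      have hlink_size : ∀ A ∈ 𝒞.memberSubfamily x, #A ≤ n := fun A hA => by
        obtain ⟨hA𝒞, hxA⟩ := mem_memberSubfamily.mp hA
        have := hsize _ hA𝒞
        rw [card_insert_of_notMem hxA] at this
        omega
      obtain ⟨S, hS, c, hScard, hSc⟩ := ih hlink_size hlink
      obtain ⟨T, hT𝒞, hTS, hT⟩ := hSc.exists_subset_of_subset_memberSubfamily hS
      exact ⟨T, hT𝒞, insert x c, hTS.trans hScard, hT⟩
    · push Not at hdeg
      obtain ⟨D, hD𝒞, hD, hcardD⟩ :=
        exists_pairwiseDisjoint_card_le (by positivity) (by positivity) hsize hdeg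
      have hkD : k + 1 ≤ #D := by
        by_contra! hDk
        have : (n + 1) * #D * (n ! * k ^ n) ≤ (n + 1)! * k ^ (n + 1) :=
          calc (n + 1) * #D * (n ! * k ^ n) ≤ (n + 1) * k * (n ! * k ^ n) := by gcongr; omega
            _ = (n + 1)! * k ^ (n + 1) := by rw [Nat.factorial_succ, pow_succ]; ring
        omega
      obtain ⟨S, hSD, hS⟩ := exists_subset_card_eq hkD
      exact ⟨S, hSD.trans hD𝒞, ∅, hS, (hD.subset hSD).isSunflower_empty⟩

end

theorem stmt9_general {V : Type*} [DecidableEq V] (H : Finset (Finset V)) (d k : ℕ)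
    (hd : 1 ≤ d)
    (𝒞 : Finset (Finset V))
    (hlarge : ∀ C ∈ 𝒞, HasSunflower H C (10 * d * k + 1))
    (hsize : ∀ C ∈ 𝒞, C.card ≤ d - 1)
    (hcard : Nat.factorial (d - 1) * k ^ (d - 1) < 𝒞.card) :
    ∃ S ⊆ 𝒞, ∃ Cstar : Finset V, S.card = k + 1 ∧
      (∀ C ∈ S, Cstar ⊆ C) ∧
      (∀ C ∈ S, ∀ C' ∈ S, C ≠ C' → C ∩ C' = Cstar) ∧
      (Cstar = ∅ → ¬ ∃ X : Finset V, X.card ≤ k ∧ IsHittingSet H X) := by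
  obtain ⟨S, hS𝒞, Cstar, hScard, hS⟩ := exists_isSunflower_of_lt_card hsize hcard
  refine ⟨S, hS𝒞, Cstar, hScard, hS.1, hS.2, ?_⟩
  rintro rfl ⟨X, hXk, hX⟩
  have hmeet : ∀ C ∈ S, (C ∩ X).Nonempty := fun C hC =>
    (hlarge C (hS𝒞 hC)).inter_nonempty_of_isHittingSet hX (by nlinarith)
  have := hS.card_le_of_disjoint (Finset.disjoint_empty_left X) hmeet
  omega

/-- Let `𝒞` be a family of large cores of a `d`-uniform hypergraph `H`, each of size
at most `d - 1`. If more than `(d-1)! * k^(d-1)` such cores exist, then there is a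
`(k+1)`-sunflower among the cores themselves, and if its core `C*` is empty then `H`
has no hitting set of size at most `k`. -/
theorem stmt9 {V : Type*} [DecidableEq V] (H : Finset (Finset V)) (d k : ℕ)
    (hd : 1 ≤ d) (hk : 1 ≤ k) (huni : ∀ F ∈ H, F.card = d)
    (𝒞 : Finset (Finset V))
    (hlarge : ∀ C ∈ 𝒞, HasSunflower H C (10 * d * k + 1))
    (hsize : ∀ C ∈ 𝒞, C.card ≤ d - 1)
    (hcard : Nat.factorial (d - 1) * k ^ (d - 1) < 𝒞.card) :
    ∃ S ⊆ 𝒞, ∃ Cstar : Finset V, S.card = k + 1 ∧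
      (∀ C ∈ S, Cstar ⊆ C) ∧
      (∀ C ∈ S, ∀ C' ∈ S, C ≠ C' → C ∩ C' = Cstar) ∧
      (Cstar = ∅ → ¬ ∃ X : Finset V, X.card ≤ k ∧ IsHittingSet H X) :=
  stmt9_general H d k hd 𝒞 hlarge hsize hcard
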